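/- Let A be a nonzero copositive n×n matrix on the boundary of the copositive cone, and suppose A is orthogonal to a completely positive matrix M having no zero rows. Then there is a positive-definite diagonal matrix D such that Ā = D⁻¹ A D⁻¹ satisfies Ā_{ii} ≤ Σ_{j≠i} |Ā_{ij}| for all i. -/

import Mathlib

open Matrix BigOperators

def Copositive {ι : Type} [Fintype ι] (A : Matrix ι ι ℝ) : Prop :=
  A.IsSymm ∧ ∀ x : ι → ℝ, (∀ i, 0 ≤ x i) → 0 ≤ x ⬝ᵥ A.mulVec x

def CompletelyPositive {ι : Type} [Fintype ι] (M : Matrix ι ι ℝ) : Prop :=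
  ∃ (p : ℕ) (v : Fin p → ι → ℝ), (∀ j i, 0 ≤ v j i) ∧
    M = ∑ j, Matrix.vecMulVec (v j) (v j)

noncomputable def cpRank {ι : Type} [Fintype ι] (M : Matrix ι ι ℝ) : ℕ :=
  sInf {p : ℕ | ∃ v : Fin p → ι → ℝ, (∀ j i, 0 ≤ v j i) ∧
    M = ∑ j, Matrix.vecMulVec (v j) (v j)}

noncomputable def pmax (n : ℕ) : ℕ :=
  sSup {k : ℕ | ∃ M : Matrix (Fin n) (Fin n) ℝ, CompletelyPositive M ∧ cpRank M = k}

def ExtremeCopositive {ι : Type} [Fintype ι] (A : Matrix ι ι ℝ) : Prop :=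
  Copositive A ∧ A ≠ 0 ∧ ∀ B C : Matrix ι ι ℝ, Copositive B → Copositive C → A = B + C →
    ∃ s t : ℝ, 0 ≤ s ∧ 0 ≤ t ∧ B = s • A ∧ C = t • A

def E12 (k : ℕ) : Matrix (Fin k) (Fin k) ℝ :=
  Matrix.of fun i j => if (i.val = 0 ∧ j.val = 1) ∨ (i.val = 1 ∧ j.val = 0) then 1 else 0

def InOrbitOfE12 {k : ℕ} (S : Matrix (Fin k) (Fin k) ℝ) : Prop :=
  ∃ (d : Fin k → ℝ) (σ : Equiv.Perm (Fin k)), (∀ i, 0 < d i) ∧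
    S = Matrix.diagonal d * (σ.permMatrix ℝ)ᵀ * E12 k * σ.permMatrix ℝ * Matrix.diagonal d

/-! Write `M = ∑ₖ vₖ vₖᵀ` with `vₖ ≥ 0`. Copositivity of `A` and `⟪M, A⟫ = 0` force `vₖᵀ A vₖ = 0`,
so each `vₖ` minimizes the quadratic form of `A` on the nonnegative orthant, and hence `(A vₖ)ᵢ = 0`
wherever `vₖᵢ > 0`. Summing `vₖᵢ (A vₖ)ᵢ = 0` over `k` gives `∑ⱼ Aᵢⱼ Mᵢⱼ = 0`, whence
`Aᵢᵢ Mᵢᵢ ≤ ∑_{j ≠ i} |Aᵢⱼ| Mᵢⱼ ≤ ∑_{j ≠ i} |Aᵢⱼ| √Mᵢᵢ √Mⱼⱼ` by Cauchy–Schwarz. As `M` has no zero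
rows, `Mᵢᵢ > 0`, and `dᵢ = Mᵢᵢ^(-1/2)` is the required scaling. -/

open Finset

section

variable {ι : Type} [Fintype ι]

theorem isClosed_setOf_copositive : IsClosed {A : Matrix ι ι ℝ | Copositive A} := by
  simp only [Copositive, Set.ofPred_and, Set.ofPred_forall]
  exact (isClosed_eq continuous_id.matrix_transpose continuous_id).inter <|
    isClosed_iInter fun x => isClosed_iInter fun _ =>
      isClosed_le continuous_const
        (continuous_const.dotProduct (continuous_id.matrix_mulVec continuous_const))

theorem Matrix.IsSymm.dotProduct_mulVec_add_smul_single [DecidableEq ι] {A : Matrix ι ι ℝ}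
    (hA : A.IsSymm) (x : ι → ℝ) (i : ι) (t : ℝ) :
    (x + t • Pi.single i 1) ⬝ᵥ A *ᵥ (x + t • Pi.single i 1) =
      x ⬝ᵥ A *ᵥ x + 2 * (A *ᵥ x) i * t + A i i * t ^ 2 := by
  have hcross : x ⬝ᵥ A *ᵥ Pi.single i 1 = (A *ᵥ x) i := by
    rw [dotProduct_mulVec, dotProduct_single, ← mulVec_transpose, hA.eq, mul_one]
  simp only [mulVec_add, mulVec_smul, dotProduct_add, add_dotProduct, dotProduct_smul,
    smul_dotProduct, single_dotProduct, hcross, smul_eq_mul, one_mul]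
  rw [mulVec_single_one]
  simp only [col_apply]
  ring

theorem Copositive.mulVec_apply_eq_zero {A : Matrix ι ι ℝ} (hA : Copositive A)
    {x : ι → ℝ} (hx : ∀ j, 0 ≤ x j) (hxA : x ⬝ᵥ A *ᵥ x = 0) {i : ι} (hi : 0 < x i) :
    (A *ᵥ x) i = 0 := by
  classical
  set c := (A *ᵥ x) i
  have hmin : IsLocalMin (fun t : ℝ => 2 * c * t + A i i * t ^ 2) 0 := by
    filter_upwards [eventually_gt_nhds (neg_lt_zero.mpr hi)] with t ht
    have hnonneg : ∀ j, 0 ≤ (x + t • Pi.single i 1 : ι → ℝ) j := by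
      intro j
      rcases eq_or_ne j i with rfl | hj
      · simp only [Pi.add_apply, Pi.smul_apply, Pi.single_eq_same, smul_eq_mul, mul_one]
        linarith
      · simp [hj, hx j]
    have := hA.2 _ hnonneg
    rw [hA.1.dotProduct_mulVec_add_smul_single, hxA] at this
    simpa using this
  have hderiv := ((hasDerivAt_id (0 : ℝ)).const_mul (2 * c)).add
    (((hasDerivAt_id (0 : ℝ)).pow 2).const_mul (A i i))
  simpa using hmin.hasDerivAt_eq_zero hderiv

theorem Copositive.mul_mulVec_apply_eq_zero {A : Matrix ι ι ℝ} (hA : Copositive A)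
    {x : ι → ℝ} (hx : ∀ j, 0 ≤ x j) (hxA : x ⬝ᵥ A *ᵥ x = 0) (i : ι) : x i * (A *ᵥ x) i = 0 := by
  rcases (hx i).eq_or_lt with hi | hi
  · rw [← hi, zero_mul]
  · rw [hA.mulVec_apply_eq_zero hx hxA hi, mul_zero]

end

section

variable {ι κ : Type} [Fintype κ]

theorem sum_vecMulVec_apply (v : κ → ι → ℝ) (i j : ι) :
    (∑ k, vecMulVec (v k) (v k)) i j = ∑ k, v k i * v k j := by
  simp only [Matrix.sum_apply, vecMulVec_apply]

theorem sum_vecMulVec_apply_nonneg {v : κ → ι → ℝ} (hv : ∀ k i, 0 ≤ v k i) (i j : ι) :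
    0 ≤ (∑ k, vecMulVec (v k) (v k)) i j := by
  rw [sum_vecMulVec_apply]
  exact sum_nonneg fun k _ => mul_nonneg (hv k i) (hv k j)

theorem sum_vecMulVec_apply_self_pos {v : κ → ι → ℝ} {i : ι}
    (h : ∃ j, (∑ k, vecMulVec (v k) (v k)) i j ≠ 0) :
    0 < (∑ k, vecMulVec (v k) (v k)) i i := by
  obtain ⟨j, hj⟩ := h
  rw [sum_vecMulVec_apply] at hj ⊢
  obtain ⟨k, -, hk⟩ := exists_ne_zero_of_sum_ne_zero hj
  exact sum_pos' (fun k _ => mul_self_nonneg _)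
    ⟨k, mem_univ k, mul_self_pos.mpr (left_ne_zero_of_mul hk)⟩

theorem sum_vecMulVec_apply_le_sqrt_mul_sqrt (v : κ → ι → ℝ) (i j : ι) :
    (∑ k, vecMulVec (v k) (v k)) i j ≤
      √((∑ k, vecMulVec (v k) (v k)) i i) * √((∑ k, vecMulVec (v k) (v k)) j j) := by
  simp only [sum_vecMulVec_apply, ← sq]
  exact Real.sum_mul_le_sqrt_mul_sqrt _ _ _

variable [Fintype ι]

theorem trace_transpose_sum_vecMulVec_mul (v : κ → ι → ℝ) (A : Matrix ι ι ℝ) :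
    trace ((∑ k, vecMulVec (v k) (v k))ᵀ * A) = ∑ k, v k ⬝ᵥ A *ᵥ v k := by
  simp only [transpose_sum, transpose_vecMulVec, sum_mul, trace_sum, vecMulVec_mul,
    trace_vecMulVec]
  exact sum_congr rfl fun k _ => by rw [dotProduct_mulVec, dotProduct_comm]

theorem Copositive.sum_mul_sum_vecMulVec_apply_eq_zero {A : Matrix ι ι ℝ} (hA : Copositive A)
    {v : κ → ι → ℝ} (hv : ∀ k i, 0 ≤ v k i)
    (horth : trace ((∑ k, vecMulVec (v k) (v k))ᵀ * A) = 0) (i : ι) :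
    ∑ j, A i j * (∑ k, vecMulVec (v k) (v k)) i j = 0 := by
  rw [trace_transpose_sum_vecMulVec_mul,
    sum_eq_zero_iff_of_nonneg fun k _ => hA.2 (v k) (hv k)] at horth
  calc ∑ j, A i j * (∑ k, vecMulVec (v k) (v k)) i j
        = ∑ k, v k i * (A *ᵥ v k) i := by
        simp only [sum_vecMulVec_apply, mulVec, dotProduct, mul_sum]
        rw [sum_comm]
        exact sum_congr rfl fun k _ => sum_congr rfl fun j _ => by ring
    _ = 0 := sum_eq_zero fun k _ =>
        hA.mul_mulVec_apply_eq_zero (hv k) (horth k (mem_univ k)) i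

variable [DecidableEq ι]

theorem diag_mul_le_sum_abs_mul_of_sum_mul_eq_zero {A M : Matrix ι ι ℝ} {i : ι}
    (hM : ∀ j, 0 ≤ M i j) (h : ∑ j, A i j * M i j = 0) :
    A i i * M i i ≤ ∑ j ∈ univ.erase i, |A i j| * M i j := by
  rw [← add_sum_erase _ _ (mem_univ i)] at h
  have : -∑ j ∈ univ.erase i, A i j * M i j ≤ ∑ j ∈ univ.erase i, |A i j| * M i j := by
    rw [← sum_neg_distrib]
    exact sum_le_sum fun j _ => by
      rw [← neg_mul]; exact mul_le_mul_of_nonneg_right (neg_le_abs _) (hM j)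
  linarith

theorem exists_diagonal_scaling_diag_le_sum_abs {A M : Matrix ι ι ℝ} (hpos : ∀ i, 0 < M i i)
    (hCS : ∀ i j, M i j ≤ √(M i i) * √(M j j))
    (hrow : ∀ i, A i i * M i i ≤ ∑ j ∈ univ.erase i, |A i j| * M i j) :
    ∃ d : ι → ℝ, (∀ i, 0 < d i) ∧ ∀ i,
      (diagonal (fun j => (d j)⁻¹) * A * diagonal (fun j => (d j)⁻¹)) i i ≤
        ∑ j ∈ univ.erase i,
          |(diagonal (fun j => (d j)⁻¹) * A * diagonal (fun j => (d j)⁻¹)) i j| := by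
  refine ⟨fun j => (√(M j j))⁻¹, fun j => inv_pos.2 (Real.sqrt_pos.2 (hpos j)),
    fun i => ?_⟩
  simp only [inv_inv, mul_diagonal, diagonal_mul, abs_mul, abs_of_nonneg, Real.sqrt_nonneg]
  calc √(M i i) * A i i * √(M i i) = A i i * M i i := by
        rw [mul_right_comm, Real.mul_self_sqrt (hpos i).le, mul_comm]
    _ ≤ ∑ j ∈ univ.erase i, |A i j| * M i j := hrow i
    _ ≤ ∑ j ∈ univ.erase i, |A i j| * (√(M i i) * √(M j j)) := by
        gcongr with j
        exact hCS i j
    _ = ∑ j ∈ univ.erase i, √(M i i) * |A i j| * √(M j j) :=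
        sum_congr rfl fun j _ => by ring

end

theorem stmt4_general {n : ℕ} (A M : Matrix (Fin n) (Fin n) ℝ)
    (hAbd : A ∈ frontier {B : Matrix (Fin n) (Fin n) ℝ | Copositive B})
    (hM : CompletelyPositive M) (hrows : ∀ i, ∃ j, M i j ≠ 0)
    (horth : Matrix.trace (Mᵀ * A) = 0) :
    ∃ d : Fin n → ℝ, (∀ i, 0 < d i) ∧
      ∀ i : Fin n,
        ((Matrix.diagonal fun j => (d j)⁻¹) * A * (Matrix.diagonal fun j => (d j)⁻¹)) i i ≤
          ∑ j ∈ Finset.univ.erase i,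
            |((Matrix.diagonal fun j => (d j)⁻¹) * A * (Matrix.diagonal fun j => (d j)⁻¹)) i j| := by
  obtain ⟨p, v, hv, rfl⟩ := hM
  have hA : Copositive A := isClosed_setOf_copositive.frontier_subset hAbd
  exact exists_diagonal_scaling_diag_le_sum_abs (fun i => sum_vecMulVec_apply_self_pos (hrows i))
    (sum_vecMulVec_apply_le_sqrt_mul_sqrt v) fun i =>
      diag_mul_le_sum_abs_mul_of_sum_mul_eq_zero (sum_vecMulVec_apply_nonneg hv i)
        (hA.sum_mul_sum_vecMulVec_apply_eq_zero hv horth i)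

theorem stmt4 {n : ℕ} (A M : Matrix (Fin n) (Fin n) ℝ) (hA0 : A ≠ 0)
    (hAbd : A ∈ frontier {B : Matrix (Fin n) (Fin n) ℝ | Copositive B})
    (hM : CompletelyPositive M) (hrows : ∀ i, ∃ j, M i j ≠ 0)
    (horth : Matrix.trace (Mᵀ * A) = 0) :
    ∃ d : Fin n → ℝ, (∀ i, 0 < d i) ∧
      ∀ i : Fin n,
        ((Matrix.diagonal fun j => (d j)⁻¹) * A * (Matrix.diagonal fun j => (d j)⁻¹)) i i ≤
          ∑ j ∈ Finset.univ.erase i,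
            |((Matrix.diagonal fun j => (d j)⁻¹) * A * (Matrix.diagonal fun j => (d j)⁻¹)) i j| :=
  stmt4_general A M hAbd hM hrows horth
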